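/- arXiv:2512.22846 — 2 statements merged into one kernel-verified Lean document; each statement's English description precedes it below -/
import Mathlib

section
/- Let X be a finite type, p : X → ℝ a nonnegative weight function summing to 1, and y₀, y₁ : X → ℝ. Define the welfare of a policy π : X → {0, 1} (viewed as π : X → ℝ with values in {0,1}) as W(π) = ∑ₓ p(x) (π(x) y₁(x) + (1 - π(x)) y₀(x)), and define τ(x) = y₁(x) - y₀(x). Let Π be a set of such policies and G = {2π - 1 : π ∈ Π}. Then π* maximizes W over Π if and only if g* = 2π* - 1 minimizes ∑ₓ p(x) (τ(x) - g(x))^2 over G. -/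
open Finset

/-- Finite-population Theorem 1: π* maximizes welfare over a class Π of
deterministic binary policies iff g* = 2π* - 1 minimizes the squared loss
against τ = y₁ - y₀ over G = {2π - 1 : π ∈ Π}. -/
theorem ewm_eq_restricted_least_squares {X : Type*} [Fintype X]
    (p : X → ℝ) (hp0 : ∀ x, 0 ≤ p x) (hp1 : ∑ x, p x = 1)
    (y₀ y₁ : X → ℝ) (Pi : Set (X → ℝ))
    (hPi : ∀ π ∈ Pi, ∀ x, π x = 0 ∨ π x = 1)
    (W : (X → ℝ) → ℝ)
    (hW : ∀ π, W π = ∑ x, p x * (π x * y₁ x + (1 - π x) * y₀ x))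
    (τ : X → ℝ) (hτ : ∀ x, τ x = y₁ x - y₀ x)
    (G : Set (X → ℝ)) (hG : G = (fun π => fun x => 2 * π x - 1) '' Pi)
    (πs : X → ℝ) (hπs : πs ∈ Pi) :
    (∀ π ∈ Pi, W π ≤ W πs) ↔
    (∀ g ∈ G, ∑ x, p x * (τ x - (2 * πs x - 1))^2 ≤ ∑ x, p x * (τ x - g x)^2) := by
  have key : ∀ π ∈ Pi, ∑ x, p x * (τ x - (2 * π x - 1))^2
      = (∑ x, p x * (τ x ^ 2 + 1 + 2 * τ x)) - 4 * W π + 4 * ∑ x, p x * y₀ x := by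
    intro π hπ
    rw [hW]
    rw [Finset.mul_sum, Finset.mul_sum, ← Finset.sum_sub_distrib, ← Finset.sum_add_distrib]
    apply Finset.sum_congr rfl
    intro x _
    rcases hPi π hπ x with h | h <;> rw [h, hτ x] <;> ring
  constructor
  · intro hmax g hg
    rw [hG] at hg
    obtain ⟨π, hπ, rfl⟩ := hg
    rw [key πs hπs, key π hπ]
    have := hmax π hπ
    linarith
  · intro hmin π hπ
    have h := hmin (fun x => 2 * π x - 1) (by rw [hG]; exact ⟨π, hπ, rfl⟩)
    rw [key πs hπs, key π hπ] at h
    linarith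
end

section
/- With the setup of the previous statement, the minimal value over all leafwise constant g : X → {-1,1} (constant on each leaf of Ω) of ∑ₓ p(x) (τ(x) - g(x))^2 equals ∑ₓ p(x) τ(x)^2 + 1 - 2 ∑_{ℓ ∈ Ω} p(ℓ) |τ_ℓ|. -/
open Finset

/-- Closed form for the minimal leafwise-constant {-1,1}-restricted squared
loss on a partition Ω: it equals ∑ p τ² + 1 - 2 ∑_ℓ p(ℓ) |τℓ|. -/
theorem min_leafwise_constant_mse {X : Type*} [Fintype X] [DecidableEq X]
    (p : X → ℝ) (hp0 : ∀ x, 0 ≤ p x) (hp1 : ∑ x, p x = 1)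
    (τ : X → ℝ) (Ω : Finset (Finset X))
    (hcover : ∀ x : X, ∃ ℓ ∈ Ω, x ∈ ℓ)
    (hdisj : ∀ ℓ ∈ Ω, ∀ ℓ' ∈ Ω, ℓ ≠ ℓ' → Disjoint ℓ ℓ')
    (hpos : ∀ ℓ ∈ Ω, 0 < ∑ x ∈ ℓ, p x)
    (τleaf : Finset X → ℝ)
    (hτleaf : ∀ ℓ ∈ Ω, τleaf ℓ = (∑ x ∈ ℓ, p x * τ x) / (∑ x ∈ ℓ, p x)) :
    IsLeast
      {v : ℝ | ∃ g : X → ℝ, (∀ x, g x = -1 ∨ g x = 1) ∧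
        (∀ ℓ ∈ Ω, ∀ x ∈ ℓ, ∀ y ∈ ℓ, g x = g y) ∧
        v = ∑ x, p x * (τ x - g x)^2}
      (∑ x, p x * (τ x)^2 + 1 - 2 * ∑ ℓ ∈ Ω, (∑ x ∈ ℓ, p x) * |τleaf ℓ|) := by
  classical
  -- partition decomposition of sums over X
  have huniv : (Finset.univ : Finset X) = Ω.biUnion id := by
    ext x
    simp only [mem_univ, mem_biUnion, id, true_iff]
    exact hcover x
  have hsum : ∀ f : X → ℝ, ∑ x, f x = ∑ ℓ ∈ Ω, ∑ x ∈ ℓ, f x := by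
    intro f
    rw [huniv]
    exact Finset.sum_biUnion (fun ℓ hℓ ℓ' hℓ' hne => hdisj ℓ hℓ ℓ' hℓ' hne)
  -- uniqueness of the leaf containing a point
  have huniq : ∀ ℓ ∈ Ω, ∀ ℓ' ∈ Ω, ∀ x, x ∈ ℓ → x ∈ ℓ' → ℓ = ℓ' := by
    intro ℓ hℓ ℓ' hℓ' x hx hx'
    by_contra hne
    exact (Finset.disjoint_left.mp (hdisj ℓ hℓ ℓ' hℓ' hne) hx) hx'
  -- leaf sum of p*τ equals p(ℓ) * τleaf ℓ
  have hleafsum : ∀ ℓ ∈ Ω, ∑ x ∈ ℓ, p x * τ x = (∑ x ∈ ℓ, p x) * τleaf ℓ := by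
    intro ℓ hℓ
    rw [hτleaf ℓ hℓ, mul_div_cancel₀]
    exact (hpos ℓ hℓ).ne'
  -- general value formula: for any admissible g,
  -- ∑ p (τ-g)² = ∑ p τ² + 1 - 2 ∑ p τ g
  have hval : ∀ g : X → ℝ, (∀ x, g x = -1 ∨ g x = 1) →
      ∑ x, p x * (τ x - g x)^2
        = ∑ x, p x * (τ x)^2 + 1 - 2 * ∑ x, p x * (τ x * g x) := by
    intro g hg
    have hg2 : ∀ x, (g x)^2 = 1 := by
      intro x; rcases hg x with h | h <;> rw [h] <;> ring
    have : ∀ x, p x * (τ x - g x)^2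
        = p x * (τ x)^2 + p x - 2 * (p x * (τ x * g x)) := by
      intro x
      have : (τ x - g x)^2 = (τ x)^2 + (g x)^2 - 2 * (τ x * g x) := by ring
      rw [this, hg2 x]; ring
    rw [Finset.sum_congr rfl fun x _ => this x]
    rw [Finset.sum_sub_distrib, Finset.sum_add_distrib, hp1,
      ← Finset.mul_sum]
  -- per-leaf inner product
  have hleaf : ∀ g : X → ℝ, (∀ x, g x = -1 ∨ g x = 1) →
      (∀ ℓ ∈ Ω, ∀ x ∈ ℓ, ∀ y ∈ ℓ, g x = g y) →
      ∀ ℓ ∈ Ω, ∑ x ∈ ℓ, p x * (τ x * g x) ≤ (∑ x ∈ ℓ, p x) * |τleaf ℓ| := by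
    intro g hg hconst ℓ hℓ
    have hne : ℓ.Nonempty := by
      by_contra h
      rw [Finset.not_nonempty_iff_eq_empty] at h
      have := hpos ℓ hℓ
      simp [h] at this
    obtain ⟨x0, hx0⟩ := hne
    have hc : ∀ x ∈ ℓ, g x = g x0 := fun x hx => hconst ℓ hℓ x hx x0 hx0
    have : ∑ x ∈ ℓ, p x * (τ x * g x) = g x0 * ∑ x ∈ ℓ, p x * τ x := by
      rw [Finset.mul_sum]
      refine Finset.sum_congr rfl fun x hx => ?_
      rw [hc x hx]; ring
    rw [this, hleafsum ℓ hℓ]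
    have habs : |g x0| = 1 := by rcases hg x0 with h | h <;> rw [h] <;> norm_num
    calc g x0 * ((∑ x ∈ ℓ, p x) * τleaf ℓ)
        ≤ |g x0 * ((∑ x ∈ ℓ, p x) * τleaf ℓ)| := le_abs_self _
      _ = (∑ x ∈ ℓ, p x) * |τleaf ℓ| := by
          rw [abs_mul, habs, one_mul, abs_mul, abs_of_pos (hpos ℓ hℓ)]
  constructor
  · -- membership: the sign-optimal g
    -- leaf of x
    set L : X → Finset X := fun x => (hcover x).choose with hL
    have hLmem : ∀ x, L x ∈ Ω ∧ x ∈ L x := fun x =>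
      ⟨(hcover x).choose_spec.1, (hcover x).choose_spec.2⟩
    set g : X → ℝ := fun x => if 0 ≤ τleaf (L x) then 1 else -1 with hgdef
    have hg : ∀ x, g x = -1 ∨ g x = 1 := by
      intro x; by_cases h : 0 ≤ τleaf (L x) <;> simp [hgdef, h]
    have hLuniq : ∀ ℓ ∈ Ω, ∀ x ∈ ℓ, L x = ℓ := by
      intro ℓ hℓ x hx
      exact huniq (L x) (hLmem x).1 ℓ hℓ x (hLmem x).2 hx
    have hconst : ∀ ℓ ∈ Ω, ∀ x ∈ ℓ, ∀ y ∈ ℓ, g x = g y := by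
      intro ℓ hℓ x hx y hy
      simp only [hgdef, hLuniq ℓ hℓ x hx, hLuniq ℓ hℓ y hy]
    refine ⟨g, hg, hconst, ?_⟩
    rw [hval g hg]
    congr 1
    congr 1
    rw [hsum (fun x => p x * (τ x * g x))]
    refine Finset.sum_congr rfl fun ℓ hℓ => ?_
    have hgx : ∀ x ∈ ℓ, g x = if 0 ≤ τleaf ℓ then 1 else -1 := by
      intro x hx; simp only [hgdef, hLuniq ℓ hℓ x hx]
    have : ∑ x ∈ ℓ, p x * (τ x * g x)
        = (if 0 ≤ τleaf ℓ then (1:ℝ) else -1) * ∑ x ∈ ℓ, p x * τ x := by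
      rw [Finset.mul_sum]
      refine Finset.sum_congr rfl fun x hx => ?_
      rw [hgx x hx]; ring
    rw [this, hleafsum ℓ hℓ]
    by_cases h : 0 ≤ τleaf ℓ
    · simp [h, abs_of_nonneg h]
    · push_neg at h
      rw [if_neg (not_le.mpr h), abs_of_neg h]; ring
  · -- lower bound
    rintro v ⟨g, hg, hconst, rfl⟩
    rw [hval g hg]
    have : ∑ x, p x * (τ x * g x) ≤ ∑ ℓ ∈ Ω, (∑ x ∈ ℓ, p x) * |τleaf ℓ| := by
      rw [hsum (fun x => p x * (τ x * g x))]
      exact Finset.sum_le_sum (hleaf g hg hconst)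
    linarith
end
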